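/- Let G' = (V', E') be a graph and construct the unweighted spanning-tree hitting set instance on vertex set V' ∪ {r} (r a new vertex) with edge set E' ∪ {{r,v} : v ∈ V'}, required subsets S_e = e for each edge e ∈ E' and S'_e = e ∪ {r} for each e ∈ E'. Then the minimum cardinality h of a spanning-tree hitting set satisfies h = c + |E'|, where c is the minimum cardinality of a vertex cover of G'. -/

import Mathlib

/-!
A spanning-tree hitting set `F` must contain every `e ∈ E'`, the only spanning tree of the
two-vertex set `e`, and to connect `e ∪ {r}` it must also contain a star edge `{r, u}` with
`u ∈ e`. Hence the vertices `u` with `{r, u} ∈ F` form a vertex cover, and as star edges never lie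
in `E'`, `|F|` is at least its size plus `|E'|`. Conversely `E'` together with the star edges of a
vertex cover is a spanning-tree hitting set.
-/

namespace SimpleGraph

variable {V : Type*} {G : SimpleGraph V}

lemma Connected.exists_adj_of_induce {s : Set V} (h : (G.induce s).Connected) {a b : V}
    (ha : a ∈ s) (hb : b ∈ s) (hab : a ≠ b) : ∃ c ∈ s, G.Adj a c := by
  have : Nontrivial s := ⟨⟨a, ha⟩, ⟨b, hb⟩, fun h => hab (congrArg Subtype.val h)⟩
  obtain ⟨c, hc⟩ := h.preconnected.exists_adj_of_nontrivial ⟨a, ha⟩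
  exact ⟨c, c.2, hc⟩

lemma connected_induce_pair_iff {u v : V} (huv : u ≠ v) :
    (G.induce {u, v}).Connected ↔ G.Adj u v := by
  refine ⟨fun h => ?_, induce_pair_connected_of_adj⟩
  obtain ⟨c, hc, hadj⟩ := h.exists_adj_of_induce (by simp) (by simp) huv
  rcases hc with rfl | rfl
  · exact (G.irrefl hadj).elim
  · exact hadj

lemma connected_induce_pair_union_singleton_iff {u v w : V} (huv : G.Adj u v) (hwu : w ≠ u)
    (hwv : w ≠ v) : (G.induce ({u, v} ∪ {w})).Connected ↔ G.Adj w u ∨ G.Adj w v := by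
  constructor
  · intro h
    obtain ⟨c, hc, hadj⟩ := h.exists_adj_of_induce (by simp) (by simp) hwu
    rcases hc with (rfl | rfl) | rfl
    · exact .inl hadj
    · exact .inr hadj
    · exact (G.irrefl hadj).elim
  · have hpair := (induce_pair_connected_of_adj huv).preconnected
    rintro (h | h) <;>
      exact connected_induce_union hpair Preconnected.of_subsingleton (by simp) rfl h.symm

lemma setOf_mem_sym2_mk (u v : V) : {x | x ∈ s(u, v)} = {u, v} :=
  Set.ext fun _ => Sym2.mem_iff

lemma connected_induce_setOf_mem_iff {e : Sym2 V} (he : ¬e.IsDiag) :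
    (G.induce {x | x ∈ e}).Connected ↔ e ∈ G.edgeSet := by
  induction e using Sym2.ind with
  | _ u v => rw [setOf_mem_sym2_mk, connected_induce_pair_iff (Sym2.mk_isDiag_iff.not.1 he),
      mem_edgeSet]

lemma connected_induce_setOf_mem_union_singleton_iff {e : Sym2 V} {w : V} (he : e ∈ G.edgeSet)
    (hw : w ∉ e) : (G.induce ({x | x ∈ e} ∪ {w})).Connected ↔ ∃ u ∈ e, G.Adj w u := by
  induction e using Sym2.ind with
  | _ u v =>
    rw [setOf_mem_sym2_mk, connected_induce_pair_union_singleton_iff he]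
    · simp
    · exact fun h => hw (h ▸ Sym2.mem_mk_left u v)
    · exact fun h => hw (h ▸ Sym2.mem_mk_right u v)

end SimpleGraph

open SimpleGraph

section ApexReduction

variable {V : Type*} {r : V}

lemma connected_induce_edge_and_apex_iff {F : Set (Sym2 V)} {e : Sym2 V} (he : ¬e.IsDiag)
    (hr : r ∉ e) :
    ((fromEdgeSet F).induce {x | x ∈ e}).Connected ∧
        ((fromEdgeSet F).induce ({x | x ∈ e} ∪ {r})).Connected ↔
      e ∈ F ∧ ∃ u ∈ e, s(r, u) ∈ F := by
  have hedge : e ∈ (fromEdgeSet F).edgeSet ↔ e ∈ F := by simp [edgeSet_fromEdgeSet, he]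
  rw [connected_induce_setOf_mem_iff he, hedge]
  refine and_congr_right fun heF => ?_
  rw [connected_induce_setOf_mem_union_singleton_iff (hedge.2 heF) hr]
  refine exists_congr fun u => and_congr_right fun hu => ?_
  rw [fromEdgeSet_adj, and_iff_left]
  rintro rfl
  exact hr hu

variable [DecidableEq V] {U C : Finset V} {E' F : Finset (Sym2 V)}

/-- The spanning-tree hitting sets of the reduction, by `connected_induce_edge_and_apex_iff`. -/
def IsApexHittingSet (U : Finset V) (r : V) (E' F : Finset (Sym2 V)) : Prop :=
  F ⊆ E' ∪ U.image (fun u => s(r, u)) ∧ ∀ e ∈ E', e ∈ F ∧ ∃ u ∈ e, s(r, u) ∈ F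

lemma card_image_sym2_mk_left (C : Finset V) : (C.image fun u => s(r, u)).card = C.card :=
  Finset.card_image_of_injective _ fun _ _ => Sym2.congr_right.1

lemma isApexHittingSet_union_image (hCU : C ⊆ U) (hC : ∀ e ∈ E', ∃ u ∈ C, u ∈ e) :
    IsApexHittingSet U r E' (E' ∪ C.image fun u => s(r, u)) := by
  refine ⟨Finset.union_subset_union subset_rfl (Finset.image_subset_image hCU),
    fun e he => ⟨Finset.mem_union_left _ he, ?_⟩⟩
  obtain ⟨u, huC, hue⟩ := hC e he
  exact ⟨u, hue, Finset.mem_union_right _ (Finset.mem_image_of_mem _ huC)⟩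

lemma card_union_image_le : (E' ∪ C.image fun u => s(r, u)).card ≤ C.card + E'.card :=
  (Finset.card_union_le _ _).trans (by rw [card_image_sym2_mk_left, add_comm])

lemma IsApexHittingSet.covers (hF : IsApexHittingSet U r E' F) (hEU : ∀ e ∈ E', ∀ u ∈ e, u ∈ U) :
    ∀ e ∈ E', ∃ u ∈ U.filter fun u => s(r, u) ∈ F, u ∈ e := by
  intro e he
  obtain ⟨u, hu, huF⟩ := (hF.2 e he).2
  exact ⟨u, Finset.mem_filter.2 ⟨hEU e he u hu, huF⟩, hu⟩

lemma IsApexHittingSet.card_filter_add_card_le (hF : IsApexHittingSet U r E' F)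
    (hr : ∀ e ∈ E', r ∉ e) : (U.filter fun u => s(r, u) ∈ F).card + E'.card ≤ F.card := by
  set C := U.filter fun u => s(r, u) ∈ F
  have hdisj : Disjoint E' (C.image fun u => s(r, u)) := by
    refine Finset.disjoint_right.2 fun e he heE => ?_
    obtain ⟨u, -, rfl⟩ := Finset.mem_image.1 he
    exact hr _ heE (Sym2.mem_mk_left r u)
  calc C.card + E'.card = (E' ∪ C.image fun u => s(r, u)).card := by
        rw [Finset.card_union_of_disjoint hdisj, card_image_sym2_mk_left, add_comm]
    _ ≤ F.card := by
        refine Finset.card_le_card (Finset.union_subset (fun e he => (hF.2 e he).1) fun e he => ?_)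
        obtain ⟨u, hu, rfl⟩ := Finset.mem_image.1 he
        exact (Finset.mem_filter.1 hu).2

end ApexReduction

lemma Nat.sInf_eq_sInf_add_of_exists_le {A B : Set ℕ} (k : ℕ) (hB : B.Nonempty)
    (hBA : ∀ b ∈ B, ∃ a ∈ A, a ≤ b + k) (hAB : ∀ a ∈ A, ∃ b ∈ B, b + k ≤ a) :
    sInf A = sInf B + k := by
  obtain ⟨a₀, ha₀, ha₀le⟩ := hBA _ (Nat.sInf_mem hB)
  obtain ⟨b, hb, hble⟩ := hAB _ (Nat.sInf_mem ⟨a₀, ha₀⟩)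
  exact le_antisymm ((Nat.sInf_le ha₀).trans ha₀le)
    ((Nat.add_le_add_right (Nat.sInf_le hb) k).trans hble)

theorem unweighted_reduction_vertex_cover_general
    {V : Type} [DecidableEq V]
    (U : Finset V) (r : V) (hr : r ∉ U)
    (E' : Finset (Sym2 V))
    (hE' : ∀ e ∈ E', ∃ u ∈ U, ∃ v ∈ U, u ≠ v ∧ e = s(u, v))
    (Star : Finset (Sym2 V)) (hStar : Star = U.image (fun u => s(r, u)))
    (Conn : Finset (Sym2 V) → Set V → Prop)
    (hConn : ∀ F S, Conn F S ↔
      ((SimpleGraph.fromEdgeSet (↑F : Set (Sym2 V))).induce S).Connected)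
    (STHS : Finset (Sym2 V) → Prop)
    (hSTHS : ∀ F, STHS F ↔ (F ⊆ E' ∪ Star ∧
      (∀ e ∈ E', Conn F {x | x ∈ e}) ∧
      (∀ e ∈ E', Conn F ({x | x ∈ e} ∪ {r})))) :
    sInf {h : ℕ | ∃ F, STHS F ∧ h = F.card}
      = sInf {c : ℕ | ∃ C : Finset V, C ⊆ U ∧ (∀ e ∈ E', ∃ u ∈ C, u ∈ e) ∧ c = C.card}
        + E'.card := by
  subst hStar
  have hEU : ∀ e ∈ E', ∀ u ∈ e, u ∈ U := by
    intro e he u hu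
    obtain ⟨a, ha, b, hb, -, rfl⟩ := hE' e he
    rcases Sym2.mem_iff.1 hu with rfl | rfl <;> assumption
  have hrE : ∀ e ∈ E', r ∉ e := fun e he hre => hr (hEU e he r hre)
  have hSTHS' : ∀ F, STHS F ↔ IsApexHittingSet U r E' F := by
    intro F
    rw [hSTHS, ← forall₂_and]
    refine and_congr_right fun _ => forall₂_congr fun e he => ?_
    obtain ⟨a, -, b, -, hab, rfl⟩ := hE' e he
    simp only [hConn]
    exact connected_induce_edge_and_apex_iff (Sym2.mk_isDiag_iff.not.2 hab) (hrE _ he)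
  refine Nat.sInf_eq_sInf_add_of_exists_le _ ⟨U.card, U, subset_rfl, ?_, rfl⟩ ?_ ?_
  · intro e he
    obtain ⟨a, ha, b, -, -, rfl⟩ := hE' e he
    exact ⟨a, ha, Sym2.mem_mk_left a b⟩
  · rintro _ ⟨C, hCU, hC, rfl⟩
    exact ⟨_, ⟨_, (hSTHS' _).2 (isApexHittingSet_union_image hCU hC), rfl⟩, card_union_image_le⟩
  · rintro _ ⟨F, hF, rfl⟩
    rw [hSTHS'] at hF
    exact ⟨_, ⟨_, Finset.filter_subset _ _, hF.covers hEU, rfl⟩, hF.card_filter_add_card_le hrE⟩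

/-- In the unweighted reduction from Vertex Cover (vertex set `V' ∪ {r}`,
edges `E' ∪ {{r,v} : v ∈ V'}`, required subsets `S_e = e` and `S'_e = e ∪ {r}` for `e ∈ E'`),
the minimum cardinality of a spanning-tree hitting set equals `c + |E'|`, where `c` is the
minimum cardinality of a vertex cover of `G' = (V', E')`. -/
theorem unweighted_reduction_vertex_cover
    {V : Type} [Fintype V] [DecidableEq V]
    (U : Finset V) (r : V) (hr : r ∉ U)
    (E' : Finset (Sym2 V))
    (hE' : ∀ e ∈ E', ∃ u ∈ U, ∃ v ∈ U, u ≠ v ∧ e = s(u, v))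
    (Star : Finset (Sym2 V)) (hStar : Star = U.image (fun u => s(r, u)))
    (Conn : Finset (Sym2 V) → Set V → Prop)
    (hConn : ∀ F S, Conn F S ↔
      ((SimpleGraph.fromEdgeSet (↑F : Set (Sym2 V))).induce S).Connected)
    (STHS : Finset (Sym2 V) → Prop)
    (hSTHS : ∀ F, STHS F ↔ (F ⊆ E' ∪ Star ∧
      (∀ e ∈ E', Conn F {x | x ∈ e}) ∧
      (∀ e ∈ E', Conn F ({x | x ∈ e} ∪ {r})))) :
    sInf {h : ℕ | ∃ F, STHS F ∧ h = F.card}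
      = sInf {c : ℕ | ∃ C : Finset V, C ⊆ U ∧ (∀ e ∈ E', ∃ u ∈ C, u ∈ e) ∧ c = C.card}
        + E'.card :=
  unweighted_reduction_vertex_cover_general U r hr E' hE' Star hStar Conn hConn STHS hSTHS
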